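/- Let σ₀ > 0, δ ∈ (0, π/2). Fix ω ∈ (0, 2π), set c₁ := cos(ω/2), c₂ := sin(ω/2), and fix μ > 0. There exists a constant C = C(ω, μ, δ) such that for every s ∈ 𝒮 and every continuously differentiable g : [−1,1] → ℂ, the function J(r) := (g(r c₁) − g(−r c₁)) · e^{−s μ c₂ r} satisfies ∫₀¹ |J'(r)|² dr ≤ C · ∫_{−1}^{1} |g'(τ)|² dτ, where J'(r) = −s μ c₂ e^{−c₂ μ s r}(g(r c₁) − g(−r c₁)) + e^{−c₂ μ s r} c₁ (g'(r c₁) + g'(−r c₁)). -/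

import Mathlib

/-!
Write `J' = X + Y` with `X` the term carrying `g(r c₁) - g(-r c₁)`. By the fundamental theorem of
calculus and Cauchy–Schwarz, `|g(r c₁) - g(-r c₁)|² ≤ 2 r |c₁| ∫|g'|²`, so `∫₀¹ |X|²` is at most a
multiple of `|s|² ∫₀^∞ r e^{-2 c₂ μ Re(s) r} dr = |s|² / (2 c₂ μ Re s)²`, which is bounded on the
sector because there `|s| sin δ ≤ Re s`. The term `Y` is handled by the substitution `τ = ± r c₁`.
-/

open Real Complex MeasureTheory Set Filter

theorem sq_setIntegral_le_measureReal_mul_setIntegral_sq {α : Type*} [MeasurableSpace α]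
    {μ : Measure α} {t : Set α} {f : α → ℝ} (ht : μ t ≠ ⊤) (hf : IntegrableOn f t μ)
    (hf2 : IntegrableOn (fun x ↦ f x ^ 2) t μ) :
    (∫ x in t, f x ∂μ) ^ 2 ≤ μ.real t * ∫ x in t, f x ^ 2 ∂μ := by
  rcases eq_or_ne (μ t) 0 with h0 | h0
  · simp [Measure.restrict_eq_zero.mpr h0]
  have hL : 0 < μ.real t := ENNReal.toReal_pos h0 ht
  have hJensen := (even_two.convexOn_pow (𝕜 := ℝ)).map_set_average_le (continuousOn_pow 2)
    isClosed_univ h0 ht (by simp) hf hf2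
  simp only [setAverage_eq, smul_eq_mul] at hJensen
  rwa [mul_pow, inv_pow, inv_mul_le_iff₀ (by positivity), sq (μ.real t), mul_assoc,
    mul_inv_cancel_left₀ hL.ne'] at hJensen

theorem norm_sub_sq_le_mul_setIntegral_norm_sq {E : Type*} [NormedAddCommGroup E]
    [NormedSpace ℝ E] [CompleteSpace E] {g g' : ℝ → E} {a b : ℝ} (hab : a ≤ b)
    (hg : ∀ x ∈ Icc a b, HasDerivAt g (g' x) x) (hg' : ContinuousOn g' (Icc a b)) :
    ‖g b - g a‖ ^ 2 ≤ (b - a) * ∫ x in Ioc a b, ‖g' x‖ ^ 2 := by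
  have hFTC : ∫ x in a..b, g' x = g b - g a :=
    intervalIntegral.integral_eq_sub_of_hasDerivAt (by rwa [uIcc_of_le hab])
      (hg'.intervalIntegrable_of_Icc hab)
  have hnorm : ‖g b - g a‖ ≤ ∫ x in Ioc a b, ‖g' x‖ := by
    rw [← hFTC, ← intervalIntegral.integral_of_le hab]
    exact intervalIntegral.norm_integral_le_integral_norm hab
  have hCS := sq_setIntegral_le_measureReal_mul_setIntegral_sq (measure_Ioc_lt_top (μ := volume)).ne
    (hg'.norm.integrableOn_Icc.mono_set Ioc_subset_Icc_self)
    ((hg'.norm.pow 2).integrableOn_Icc.mono_set Ioc_subset_Icc_self)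
  rw [Real.volume_real_Ioc_of_le hab] at hCS
  exact (pow_le_pow_left₀ (norm_nonneg _) hnorm 2).trans hCS

theorem abs_mul_setIntegral_comp_mul_le {f : ℝ → ℝ} (hf : ∀ x, 0 ≤ f x)
    (hfi : IntegrableOn f (Ioo (-1) 1)) {c : ℝ} (hc : |c| < 1) :
    |c| * ∫ r in Ioo (0 : ℝ) 1, f (r * c) ≤ ∫ x in Ioo (-1 : ℝ) 1, f x := by
  have hsub : uIoc 0 c ⊆ Ioo (-1) 1 := fun x hx ↦ abs_lt.mp <| by
    simpa using (abs_sub_left_of_mem_uIcc (uIoc_subset_uIcc hx)).trans_lt (by rwa [sub_zero])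
  have hI : 0 ≤ ∫ r in (0 : ℝ)..1, f (r * c) :=
    intervalIntegral.integral_nonneg zero_le_one fun x _ ↦ hf _
  calc |c| * ∫ r in Ioo (0 : ℝ) 1, f (r * c)
      = |∫ x in uIoc 0 c, f x| := by
        rw [← intervalIntegral.abs_integral_eq_abs_integral_uIoc, ← integral_Ioc_eq_integral_Ioo,
          ← intervalIntegral.integral_of_le zero_le_one, ← abs_of_nonneg hI, ← abs_mul,
          ← smul_eq_mul, intervalIntegral.smul_integral_comp_mul_right, zero_mul, one_mul]
    _ = ∫ x in uIoc 0 c, f x := abs_of_nonneg (setIntegral_nonneg measurableSet_uIoc fun x _ ↦ hf x)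
    _ ≤ ∫ x in Ioo (-1 : ℝ) 1, f x :=
        setIntegral_mono_set hfi (Eventually.of_forall hf) hsub.eventuallyLE

section ContDiffOnIcc

variable {E : Type*} [NormedAddCommGroup E] [NormedSpace ℝ E] {g : ℝ → E} {a b : ℝ}

theorem ContDiffOn.hasDerivAt_deriv_of_mem_Ioo (hg : ContDiffOn ℝ 1 g (Icc a b)) {x : ℝ}
    (hx : x ∈ Ioo a b) : HasDerivAt g (deriv g x) x :=
  ((hg.differentiableOn one_ne_zero).differentiableAt (Icc_mem_nhds hx.1 hx.2)).hasDerivAt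

theorem ContDiffOn.continuousOn_deriv_Ioo (hg : ContDiffOn ℝ 1 g (Icc a b)) :
    ContinuousOn (deriv g) (Ioo a b) :=
  (hg.mono Ioo_subset_Icc_self).continuousOn_deriv_of_isOpen isOpen_Ioo le_rfl

theorem ContDiffOn.integrableOn_norm_deriv_sq_Ioo (hg : ContDiffOn ℝ 1 g (Icc a b))
    (hab : a < b) : IntegrableOn (fun x ↦ ‖deriv g x‖ ^ 2) (Ioo a b) := by
  have hcont := hg.continuousOn_derivWithin (uniqueDiffOn_Icc hab) le_rfl
  refine ((hcont.norm.pow 2).integrableOn_Icc.mono_set Ioo_subset_Icc_self).congr_fun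
    (fun x hx ↦ ?_) measurableSet_Ioo
  simp only [Pi.pow_apply]
  rw [derivWithin_of_mem_nhds (Icc_mem_nhds hx.1 hx.2)]

theorem ContDiffOn.norm_sub_neg_sq_le [CompleteSpace E] (hg : ContDiffOn ℝ 1 g (Icc (-1) 1))
    {x : ℝ} (hx : |x| < 1) :
    ‖g x - g (-x)‖ ^ 2 ≤ 2 * |x| * ∫ τ in Ioo (-1 : ℝ) 1, ‖deriv g τ‖ ^ 2 := by
  wlog hx0 : 0 ≤ x generalizing x
  · simpa [norm_sub_rev] using this (by rwa [abs_neg]) (neg_nonneg.mpr (not_le.mp hx0).le)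
  rw [abs_of_nonneg hx0] at hx ⊢
  have hsub : Icc (-x) x ⊆ Ioo (-1) 1 := Icc_subset_Ioo (by linarith) hx
  calc ‖g x - g (-x)‖ ^ 2 ≤ (x - -x) * ∫ τ in Ioc (-x) x, ‖deriv g τ‖ ^ 2 :=
        norm_sub_sq_le_mul_setIntegral_norm_sq (by linarith)
          (fun τ hτ ↦ hg.hasDerivAt_deriv_of_mem_Ioo (hsub hτ))
          (hg.continuousOn_deriv_Ioo.mono hsub)
    _ ≤ 2 * x * ∫ τ in Ioo (-1 : ℝ) 1, ‖deriv g τ‖ ^ 2 := by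
        rw [sub_neg_eq_add, ← two_mul]
        refine mul_le_mul_of_nonneg_left ?_ (by positivity)
        exact setIntegral_mono_set (hg.integrableOn_norm_deriv_sq_Ioo (by norm_num))
          (Eventually.of_forall fun _ ↦ by positivity) (Ioc_subset_Icc_self.trans hsub).eventuallyLE

theorem ContDiffOn.integrableOn_norm_deriv_comp_mul_sq (hg : ContDiffOn ℝ 1 g (Icc (-1) 1))
    {c : ℝ} (hc : |c| < 1) : IntegrableOn (fun r ↦ ‖deriv g (r * c)‖ ^ 2) (Ioo (0 : ℝ) 1) := by
  have hmaps : MapsTo (· * c) (Icc (0 : ℝ) 1) (Ioo (-1) 1) := fun r hr ↦ abs_lt.mp <| by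
    rw [abs_mul, abs_of_nonneg hr.1]
    exact (mul_le_of_le_one_left (abs_nonneg c) hr.2).trans_lt hc
  exact (((hg.continuousOn_deriv_Ioo.comp (continuous_mul_const c).continuousOn
    hmaps).norm.pow 2).integrableOn_Icc).mono_set Ioo_subset_Icc_self

theorem ContDiffOn.sq_mul_setIntegral_norm_deriv_comp_mul_sq_le
    (hg : ContDiffOn ℝ 1 g (Icc (-1) 1)) {c : ℝ} (hc : |c| < 1) :
    c ^ 2 * ∫ r in Ioo (0 : ℝ) 1, ‖deriv g (r * c)‖ ^ 2 ≤
      |c| * ∫ τ in Ioo (-1 : ℝ) 1, ‖deriv g τ‖ ^ 2 := by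
  rw [← sq_abs, sq, mul_assoc]
  gcongr
  exact abs_mul_setIntegral_comp_mul_le (fun _ ↦ by positivity)
    (hg.integrableOn_norm_deriv_sq_Ioo (by norm_num)) hc

end ContDiffOnIcc

theorem setIntegral_Ioo_mul_exp_neg_mul_le {b : ℝ} (hb : 0 < b) :
    ∫ r in Ioo (0 : ℝ) 1, r * Real.exp (-(b * r)) ≤ 1 / b ^ 2 := by
  have hGamma : ∫ r in Ioi (0 : ℝ), r * Real.exp (-(b * r)) = 1 / b ^ 2 := by
    have := integral_rpow_mul_exp_neg_mul_Ioi two_pos hb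
    norm_num [Real.Gamma_two] at this
    simpa using this
  calc ∫ r in Ioo (0 : ℝ) 1, r * Real.exp (-(b * r))
      ≤ ∫ r in Ioi (0 : ℝ), r * Real.exp (-(b * r)) := by
        -- integrable on `Ioi 0` because its integral is nonzero
        refine setIntegral_mono_set (Integrable.of_integral_ne_zero ?_) ?_
          (Ioo_subset_Ioi_self.eventuallyLE)
        · rw [hGamma]; positivity
        · filter_upwards [self_mem_ae_restrict measurableSet_Ioi] with r hr
          exact mul_nonneg (le_of_lt hr) (Real.exp_pos _).le
    _ = 1 / b ^ 2 := hGamma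

theorem norm_mul_sin_le_re {s : ℂ} {δ : ℝ} (hδ : 0 ≤ δ) (hs : |arg s| ≤ π / 2 - δ) :
    ‖s‖ * Real.sin δ ≤ s.re := by
  rw [← norm_mul_cos_arg, ← Real.cos_pi_div_two_sub, ← Real.cos_abs (arg s)]
  gcongr
  exact Real.cos_le_cos_of_nonneg_of_le_pi (abs_nonneg _) (by linarith [pi_pos]) hs

/-- The paper's `J'(r)`, with `c₁ = cos(ω/2)` and `c₂ = sin(ω/2)` kept as parameters. -/
noncomputable def tangentialJumpDeriv (μ c₁ c₂ : ℝ) (s : ℂ) (g : ℝ → ℂ) (r : ℝ) : ℂ :=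
  -s * μ * c₂ * cexp (-c₂ * μ * s * r) * (g (r * c₁) - g (-(r * c₁))) +
    cexp (-c₂ * μ * s * r) * c₁ * (deriv g (r * c₁) + deriv g (-(r * c₁)))

theorem norm_tangentialJumpDeriv_sq_le {μ c₁ c₂ r : ℝ} {s : ℂ} (g : ℝ → ℂ)
    (hr : 0 ≤ c₂ * μ * s.re * r) :
    ‖tangentialJumpDeriv μ c₁ c₂ s g r‖ ^ 2 ≤
      2 * (‖s‖ * μ * c₂) ^ 2 * Real.exp (-(2 * (c₂ * μ * s.re) * r)) *
          ‖g (r * c₁) - g (-(r * c₁))‖ ^ 2 +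
        4 * c₁ ^ 2 * (‖deriv g (r * c₁)‖ ^ 2 + ‖deriv g (-(r * c₁))‖ ^ 2) := by
  unfold tangentialJumpDeriv
  set e := Real.exp (-(c₂ * μ * s.re * r))
  have hnorm_exp : ‖cexp (-c₂ * μ * s * r)‖ = e := by
    rw [norm_exp]; congr 1; simp
  have he : e ≤ 1 := Real.exp_le_one_iff.mpr (neg_nonpos.mpr hr)
  have he2 : e ^ 2 = Real.exp (-(2 * (c₂ * μ * s.re) * r)) := by
    rw [← Real.exp_nat_mul]; ring_nf
  set P := ‖deriv g (r * c₁)‖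
  set Q := ‖deriv g (-(r * c₁))‖
  set X := -s * μ * c₂ * cexp (-c₂ * μ * s * r) * (g (r * c₁) - g (-(r * c₁))) with hX
  set Y := cexp (-c₂ * μ * s * r) * c₁ * (deriv g (r * c₁) + deriv g (-(r * c₁))) with hY
  have hX2 : ‖X‖ ^ 2 = (‖s‖ * μ * c₂) ^ 2 * e ^ 2 * ‖g (r * c₁) - g (-(r * c₁))‖ ^ 2 := by
    simp only [hX, norm_mul, norm_neg, norm_real, Real.norm_eq_abs, hnorm_exp, mul_pow, sq_abs]
  have hY2 : ‖Y‖ ^ 2 ≤ 2 * c₁ ^ 2 * (P ^ 2 + Q ^ 2) := by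
    rw [hY, norm_mul, norm_mul, hnorm_exp, norm_real, Real.norm_eq_abs]
    calc (e * |c₁| * ‖deriv g (r * c₁) + deriv g (-(r * c₁))‖) ^ 2 ≤ (1 * |c₁| * (P + Q)) ^ 2 := by
          gcongr; exact norm_add_le _ _
      _ ≤ 2 * c₁ ^ 2 * (P ^ 2 + Q ^ 2) := by
          rw [one_mul, mul_pow, sq_abs]
          linarith [mul_le_mul_of_nonneg_left (add_sq_le (a := P) (b := Q)) (sq_nonneg c₁)]
  calc ‖X + Y‖ ^ 2 ≤ (‖X‖ + ‖Y‖) ^ 2 := by gcongr; exact norm_add_le _ _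
    _ ≤ 2 * (‖X‖ ^ 2 + ‖Y‖ ^ 2) := add_sq_le
    _ ≤ _ := by rw [hX2, ← he2]; linarith [hY2]

theorem norm_tangentialJumpDeriv_sq_le_of_sector {μ c₁ c₂ κ r : ℝ} {s : ℂ} {g : ℝ → ℂ}
    (hg : ContDiffOn ℝ 1 g (Icc (-1) 1)) (hc₁ : |c₁| < 1) (hc₂ : 0 < c₂) (hμ : 0 < μ)
    (hre : 0 < s.re) (hκ : 0 < κ) (hsκ : ‖s‖ * κ ≤ s.re) (hr : r ∈ Ioo (0 : ℝ) 1) :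
    ‖tangentialJumpDeriv μ c₁ c₂ s g r‖ ^ 2 ≤
      4 * (∫ τ in Ioo (-1 : ℝ) 1, ‖deriv g τ‖ ^ 2) / κ ^ 2 * (c₂ * μ * s.re) ^ 2 *
          (r * Real.exp (-(2 * (c₂ * μ * s.re) * r))) +
        4 * (c₁ ^ 2 * ‖deriv g (r * c₁)‖ ^ 2) + 4 * ((-c₁) ^ 2 * ‖deriv g (r * -c₁)‖ ^ 2) := by
  obtain ⟨hr0, hr1⟩ := hr
  set β := c₂ * μ * s.re
  have hs : (‖s‖ * μ * c₂) ^ 2 ≤ β ^ 2 / κ ^ 2 := by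
    rw [le_div_iff₀ (by positivity), ← mul_pow]
    have : ‖s‖ * μ * c₂ * κ ≤ β := by nlinarith [mul_pos hc₂ hμ]
    gcongr
  have hrc : |r * c₁| ≤ r := by
    rw [abs_mul, abs_of_pos hr0]; exact mul_le_of_le_one_right hr0.le hc₁.le
  have hjump := hg.norm_sub_neg_sq_le (hrc.trans_lt hr1)
  calc _ ≤ 2 * (‖s‖ * μ * c₂) ^ 2 * Real.exp (-(2 * β * r)) * ‖g (r * c₁) - g (-(r * c₁))‖ ^ 2 +
        4 * c₁ ^ 2 * (‖deriv g (r * c₁)‖ ^ 2 + ‖deriv g (-(r * c₁))‖ ^ 2) :=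
        norm_tangentialJumpDeriv_sq_le g (by positivity)
    _ ≤ 2 * (β ^ 2 / κ ^ 2) * Real.exp (-(2 * β * r)) *
          (2 * r * ∫ τ in Ioo (-1 : ℝ) 1, ‖deriv g τ‖ ^ 2) +
        4 * c₁ ^ 2 * (‖deriv g (r * c₁)‖ ^ 2 + ‖deriv g (-(r * c₁))‖ ^ 2) := by
        gcongr; exact hjump.trans (by gcongr)
    _ = _ := by rw [mul_neg]; ring

theorem integral_norm_tangentialJumpDeriv_sq_le {μ c₁ c₂ κ : ℝ} {s : ℂ} {g : ℝ → ℂ}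
    (hg : ContDiffOn ℝ 1 g (Icc (-1) 1)) (hc₁ : |c₁| < 1) (hc₂ : 0 < c₂) (hμ : 0 < μ)
    (hre : 0 < s.re) (hκ : 0 < κ) (hsκ : ‖s‖ * κ ≤ s.re) :
    ∫ r in Ioo (0 : ℝ) 1, ‖tangentialJumpDeriv μ c₁ c₂ s g r‖ ^ 2 ≤
      (8 + 1 / κ ^ 2) * ∫ τ in Ioo (-1 : ℝ) 1, ‖deriv g τ‖ ^ 2 := by
  set E := ∫ τ in Ioo (-1 : ℝ) 1, ‖deriv g τ‖ ^ 2
  have hE : 0 ≤ E := setIntegral_nonneg measurableSet_Ioo fun _ _ ↦ by positivity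
  set β := c₂ * μ * s.re
  have hβ : 0 < β := by positivity
  set A := 4 * E / κ ^ 2 * β ^ 2
  have hc₁' : |-c₁| < 1 := by rwa [abs_neg]
  have hint_exp : IntegrableOn (fun r ↦ r * Real.exp (-(2 * β * r))) (Ioo (0 : ℝ) 1) :=
    (by fun_prop : Continuous fun r ↦ r * Real.exp (-(2 * β * r))).integrableOn_Icc.mono_set
      Ioo_subset_Icc_self
  have hint₁ := hg.integrableOn_norm_deriv_comp_mul_sq hc₁
  have hint₂ := hg.integrableOn_norm_deriv_comp_mul_sq hc₁'
  calc ∫ r in Ioo (0 : ℝ) 1, ‖tangentialJumpDeriv μ c₁ c₂ s g r‖ ^ 2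
      ≤ ∫ r in Ioo (0 : ℝ) 1, (A * (r * Real.exp (-(2 * β * r))) +
          4 * (c₁ ^ 2 * ‖deriv g (r * c₁)‖ ^ 2) + 4 * ((-c₁) ^ 2 * ‖deriv g (r * -c₁)‖ ^ 2)) :=
        integral_mono_of_nonneg (Eventually.of_forall fun _ ↦ by positivity)
          (((hint_exp.const_mul _).add ((hint₁.const_mul _).const_mul _)).add
            ((hint₂.const_mul _).const_mul _))
          ((ae_restrict_iff' measurableSet_Ioo).mpr (Eventually.of_forall fun _ hr ↦
            norm_tangentialJumpDeriv_sq_le_of_sector hg hc₁ hc₂ hμ hre hκ hsκ hr))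
    _ = A * (∫ r in Ioo (0 : ℝ) 1, r * Real.exp (-(2 * β * r))) +
          4 * (c₁ ^ 2 * ∫ r in Ioo (0 : ℝ) 1, ‖deriv g (r * c₁)‖ ^ 2) +
          4 * ((-c₁) ^ 2 * ∫ r in Ioo (0 : ℝ) 1, ‖deriv g (r * -c₁)‖ ^ 2) := by
        rw [integral_add, integral_add, integral_const_mul, integral_const_mul, integral_const_mul,
          integral_const_mul, integral_const_mul]
        exacts [hint_exp.const_mul _, (hint₁.const_mul _).const_mul _,
          (hint_exp.const_mul _).add ((hint₁.const_mul _).const_mul _),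
          (hint₂.const_mul _).const_mul _]
    _ ≤ A * (1 / (2 * β) ^ 2) + 4 * (|c₁| * E) + 4 * (|-c₁| * E) := by
        gcongr A * ?_ + 4 * ?_ + 4 * ?_
        · exact setIntegral_Ioo_mul_exp_neg_mul_le (by positivity)
        · exact hg.sq_mul_setIntegral_norm_deriv_comp_mul_sq_le hc₁
        · exact hg.sq_mul_setIntegral_norm_deriv_comp_mul_sq_le hc₁'
    _ ≤ (8 + 1 / κ ^ 2) * E := by
        rw [abs_neg]
        simp only [A]
        field_simp
        nlinarith [mul_nonneg (mul_nonneg hE (sq_nonneg κ)) (sub_nonneg.mpr hc₁.le)]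

/-- Tangential-derivative jump estimate at a corner: with `c₁ = cos(ω/2)`, `c₂ = sin(ω/2)`,
`μ > 0`, there is `C = C(ω, μ, δ)` such that for every `s` in the sector `𝒮` (any `σ₀ > 0`)
and every `C¹` function `g : [-1,1] → ℂ`, the radial derivative
`J'(r) = -s μ c₂ e^{-c₂ μ s r}(g(r c₁) - g(-r c₁)) + e^{-c₂ μ s r} c₁ (g'(r c₁) + g'(-r c₁))`
satisfies `∫₀¹ |J'(r)|² dr ≤ C ∫_{-1}^{1} |g'|²`. -/
theorem corner_tangential_jump_estimate (δ ω μ : ℝ) (hδ : δ ∈ Set.Ioo 0 (π / 2))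
    (hω : ω ∈ Set.Ioo 0 (2 * π)) (hμ : 0 < μ) :
    ∃ C : ℝ, 0 < C ∧
      ∀ (σ₀ : ℝ), 0 < σ₀ →
      ∀ (s : ℂ), σ₀ < s.re →
        Complex.arg s ∈ Set.Ioo (-(π / 2) + δ) (π / 2 - δ) →
      ∀ g : ℝ → ℂ, ContDiffOn ℝ 1 g (Set.Icc (-1 : ℝ) 1) →
      (∫ r in Set.Ioo (0 : ℝ) 1,
          ‖(-s * μ * Real.sin (ω / 2) * Complex.exp (-(Real.sin (ω / 2)) * μ * s * r) *
                (g (r * Real.cos (ω / 2)) - g (-(r * Real.cos (ω / 2)))) +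
              Complex.exp (-(Real.sin (ω / 2)) * μ * s * r) * Real.cos (ω / 2) *
                (deriv g (r * Real.cos (ω / 2)) + deriv g (-(r * Real.cos (ω / 2)))))‖ ^ 2) ≤
        C * ∫ τ in Set.Ioo (-1 : ℝ) 1, ‖deriv g τ‖ ^ 2 := by
  have hsin_δ : 0 < Real.sin δ := Real.sin_pos_of_pos_of_lt_pi hδ.1 (by linarith [hδ.2, pi_pos])
  have hc₂ : 0 < Real.sin (ω / 2) :=
    Real.sin_pos_of_pos_of_lt_pi (by linarith [hω.1]) (by linarith [hω.2])
  have hc₁ : |Real.cos (ω / 2)| < 1 := by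
    rw [← sq_lt_one_iff_abs_lt_one]
    nlinarith [Real.sin_sq_add_cos_sq (ω / 2)]
  refine ⟨8 + 1 / Real.sin δ ^ 2, by positivity, fun σ₀ hσ₀ s hs harg g hg ↦ ?_⟩
  have hsector : ‖s‖ * Real.sin δ ≤ s.re :=
    norm_mul_sin_le_re hδ.1.le (abs_le.mpr ⟨by linarith [harg.1], by linarith [harg.2]⟩)
  exact integral_norm_tangentialJumpDeriv_sq_le hg hc₁ hc₂ hμ (hσ₀.trans hs) hsin_δ hsector
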